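/- Every stable model of a logic program P with negation as failure in the head is also a set-stable model of P. -/

import Mathlib

/- Literals: atoms and naf-negated atoms -/
inductive Lit (α : Type) where
  | pos : α → Lit α
  | neg : α → Lit α
deriving DecidableEq

/- A rule with a head sentence and a finite body of sentences -/
structure ABARule (σ : Type) where
  head : σ
  body : Finset σ

/- A logic program with naf in the head: rules over literals -/
abbrev LP (α : Type) := Set (ABARule (Lit α))

/-- Herbrand base: atoms occurring in P -/
def HB {α : Type} (P : LP α) : Set α :=
  {a | ∃ r ∈ P, r.head = Lit.pos a ∨ r.head = Lit.neg a ∨ Lit.pos a ∈ r.body ∨ Lit.neg a ∈ r.body}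

/-- Δ(I) = {not p | p ∈ HB_P, p ∉ I} -/
def DeltaSet {α : Type} (P : LP α) (I : Set α) : Set (Lit α) :=
  {l | ∃ p, p ∈ HB P ∧ p ∉ I ∧ l = Lit.neg p}

/- Positive program rules: possibly empty head (constraints) -/
structure PosRule (α : Type) where
  head : Option α
  body : Set α

def bodyPos {α : Type} (r : ABARule (Lit α)) : Set α := {a | Lit.pos a ∈ r.body}
def bodyNeg {α : Type} (r : ABARule (Lit α)) : Set α := {a | Lit.neg a ∈ r.body}
def headPos {α : Type} (r : ABARule (Lit α)) : Option α :=
  match r.head with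
  | .pos a => some a
  | .neg _ => none
def headNeg {α : Type} (r : ABARule (Lit α)) : Set α := {a | r.head = Lit.neg a}

/-- The reduct P^I -/
def reduct {α : Type} (P : LP α) (I : Set α) : Set (PosRule α) :=
  {q | ∃ r ∈ P, bodyNeg r ∩ I = ∅ ∧ headNeg r ⊆ I ∧ q = ⟨headPos r, bodyPos r⟩}

/-- Conditions (a) and (b): J is a (supported) Herbrand model of a positive program Q -/
def SatModel {α : Type} (Q : Set (PosRule α)) (J : Set α) : Prop :=
  (∀ p, p ∈ J ↔ ∃ q ∈ Q, q.head = some p ∧ q.body ⊆ J) ∧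
  (∀ q ∈ Q, q.head = none → ¬ q.body ⊆ J)

/-- Stable model: ⊆-minimal set of atoms satisfying (a) and (b) w.r.t. P^I -/
def StableModel {α : Type} (P : LP α) (I : Set α) : Prop :=
  I ⊆ HB P ∧ SatModel (reduct P I) I ∧ ∀ J ⊆ I, SatModel (reduct P I) J → J = I

/-- Derivability in a positive program -/
inductive PosDeriv {α : Type} (Q : Set (PosRule α)) : α → Prop
  | step {q : PosRule α} {a : α} : q ∈ Q → q.head = some a →
      (∀ b ∈ q.body, PosDeriv Q b) → PosDeriv Q a

/-- Tree-derivability of a sentence from (a subset of) the assumption set S using rules R -/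
inductive Deriv {σ : Type} (R : Set (ABARule σ)) (S : Set σ) : σ → Prop
  | assum {s : σ} : s ∈ S → Deriv R S s
  | step {r : ABARule σ} : r ∈ R → (∀ b ∈ r.body, Deriv R S b) → Deriv R S r.head

/- Assumption-based argumentation frameworks -/
structure ABAF (σ : Type) where
  L : Set σ
  R : Set (ABARule σ)
  A : Set σ
  co : σ → σ

def ThSet {σ : Type} (D : ABAF σ) (S : Set σ) : Set σ := {p | Deriv D.R S p}

def ConflictFree {σ : Type} (D : ABAF σ) (S : Set σ) : Prop :=
  ∀ a ∈ S, ¬ Deriv D.R S (D.co a)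

def ABAClosed {σ : Type} (D : ABAF σ) (S : Set σ) : Prop :=
  ∀ a ∈ D.A, Deriv D.R S a → a ∈ S

/-- Stable extensions: closed conflict-free sets attacking every outside assumption -/
def StableExt {σ : Type} (D : ABAF σ) (S : Set σ) : Prop :=
  S ⊆ D.A ∧ ConflictFree D S ∧ ABAClosed D S ∧
    ∀ x ∈ D.A, x ∉ S → Deriv D.R S (D.co x)

/-- Set-stable extensions: attack the closure cl({x}) of every outside assumption -/
def SetStableExt {σ : Type} (D : ABAF σ) (S : Set σ) : Prop :=
  S ⊆ D.A ∧ ConflictFree D S ∧ ABAClosed D S ∧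
    ∀ x ∈ D.A, x ∉ S → ∃ b ∈ D.A, Deriv D.R {x} b ∧ Deriv D.R S (D.co b)

/-- The ABA framework D_P corresponding to an LP P -/
def ABAFofLP {α : Type} (P : LP α) : ABAF (Lit α) :=
  { L := {l | ∃ p ∈ HB P, l = Lit.pos p ∨ l = Lit.neg p}
    R := P
    A := {l | ∃ p ∈ HB P, l = Lit.neg p}
    co := fun l => match l with
      | .pos p => Lit.pos p
      | .neg p => Lit.pos p }

/-- The LP-ABA fragment: no assumption is a contrary, contrary injective, L = A ∪ Ā
    (together with well-formedness of rules and contraries w.r.t. the language) -/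
def IsLPABA {σ : Type} (D : ABAF σ) : Prop :=
  (∀ r ∈ D.R, r.head ∈ D.L ∧ ∀ b ∈ r.body, b ∈ D.L) ∧
  D.A ⊆ D.L ∧
  (∀ a ∈ D.A, D.co a ∉ D.A) ∧
  Set.InjOn D.co D.A ∧
  D.L = D.A ∪ D.co '' D.A

open Classical in
/-- rep(a) = not ā for assumptions, rep(s) = s (as an atom) otherwise -/
noncomputable def repLit {σ : Type} (D : ABAF σ) (s : σ) : Lit σ :=
  if s ∈ D.A then Lit.neg (D.co s) else Lit.pos s

noncomputable def repRule {σ : Type} [DecidableEq σ] (D : ABAF σ) (r : ABARule σ) :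
    ABARule (Lit σ) :=
  ⟨repLit D r.head, r.body.image (repLit D)⟩

/-- The LP P_D associated with an (LP-)ABAF D -/
noncomputable def LPofABAF {σ : Type} [DecidableEq σ] (D : ABAF σ) : LP σ :=
  (repRule D) '' D.R

/-- One-step support operator -/
def suppOp {α : Type} (P : LP α) (S : Set (Lit α)) : Set (Lit α) :=
  S ∪ {l | ∃ r ∈ P, r.head = l ∧ ∀ b ∈ r.body, b ∈ S}

/-- Closure cl(S) = ⋃_{i>0} suppⁱ(S) -/
def clLP {α : Type} (P : LP α) (S : Set (Lit α)) : Set (Lit α) :=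
  ⋃ i : ℕ, (suppOp P)^[i + 1] S

/-- The set-stable reduct P^I_s = P^I ∪ {a ← b | a ≠ b, not b ∈ cl({not a})} -/
def sReduct {α : Type} (P : LP α) (I : Set α) : Set (PosRule α) :=
  reduct P I ∪
    {q | ∃ a b, a ∈ HB P ∧ b ∈ HB P ∧ a ≠ b ∧ Lit.neg b ∈ clLP P {Lit.neg a} ∧
        q = ⟨some a, {b}⟩}

/-- Set-stable models -/
def SetStableModel {α : Type} (P : LP α) (I : Set α) : Prop :=
  I ⊆ HB P ∧ SatModel (sReduct P I) I ∧ ∀ J ⊆ I, SatModel (sReduct P I) J → J = I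

/-- Bipolar LPs: each rule body is a single naf-literal -/
def IsBipolarLP {α : Type} (P : LP α) : Prop :=
  ∀ r ∈ P, ∃ b, r.body = {Lit.neg b}

/-- All (positive and naf) literals over the Herbrand base of P -/
def LitsOf {α : Type} (P : LP α) : Set (Lit α) :=
  {l | ∃ p ∈ HB P, l = Lit.pos p ∨ l = Lit.neg p}

/-! Reading `not p` as true in `I` iff `p ∉ I`, a model `I` of `P^I` satisfies every rule of `P`,
so truth in `I` is preserved by the closure `cl`. Hence if `not b ∈ cl({not a})` and `a ∉ I`, then
`b ∉ I`: the extra rules `a ← b` of `P_s` hold in `I`, which therefore still satisfies (a) and (b)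
for `P^I_s`. For minimality, inside any model `J ⊆ I` of `P^I_s` the atoms derivable in `P^I` by
rules with bodies in `J` form a model of `P^I`, which is `I` by minimality of `I`. -/

def Lit.Holds {α : Type} (I : Set α) : Lit α → Prop
  | .pos p => p ∈ I
  | .neg p => p ∉ I

section Closure

variable {α : Type} {P : LP α} {S T : Set (Lit α)}

theorem suppOp_subset (hT : ∀ r ∈ P, (∀ b ∈ r.body, b ∈ T) → r.head ∈ T) (hST : S ⊆ T) :
    suppOp P S ⊆ T := by
  rintro l (hl | ⟨r, hr, rfl, hbody⟩)
  · exact hST hl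
  · exact hT r hr fun b hb => hST (hbody b hb)

theorem clLP_subset (hT : ∀ r ∈ P, (∀ b ∈ r.body, b ∈ T) → r.head ∈ T) (hST : S ⊆ T) :
    clLP P S ⊆ T := by
  have iterate_subset : ∀ i, (suppOp P)^[i] S ⊆ T := by
    intro i
    induction i with
    | zero => exact hST
    | succ n ih =>
      rw [Function.iterate_succ_apply']
      exact suppOp_subset hT ih
  exact Set.iUnion_subset fun i => iterate_subset (i + 1)

end Closure

section Reduct

variable {α : Type} {P : LP α} {I : Set α} {r : ABARule (Lit α)}

theorem mk_mem_reduct (hr : r ∈ P) (hbody : ∀ b ∈ r.body, b.Holds I) (hhead : headNeg r ⊆ I) :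
    (⟨headPos r, bodyPos r⟩ : PosRule α) ∈ reduct P I := by
  refine ⟨r, hr, ?_, hhead, rfl⟩
  exact Set.eq_empty_iff_forall_notMem.2 fun a ⟨ha, haI⟩ => hbody _ ha haI

theorem SatModel.holds_head (hI : SatModel (reduct P I) I) (hr : r ∈ P)
    (hbody : ∀ b ∈ r.body, b.Holds I) : r.head.Holds I := by
  have hpos : bodyPos r ⊆ I := fun a ha => hbody _ ha
  cases hh : r.head with
  | pos p =>
    have hq := mk_mem_reduct hr hbody fun a ha => by simp_all [headNeg]
    exact (hI.1 p).2 ⟨_, hq, by simp [headPos, hh], hpos⟩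
  | neg p =>
    intro hp
    have hq := mk_mem_reduct hr hbody fun a ha => by simp_all [headNeg]
    exact hI.2 _ hq (by simp [headPos, hh]) hpos

theorem SatModel.holds_of_mem_clLP (hI : SatModel (reduct P I) I) {S : Set (Lit α)}
    (hS : ∀ l ∈ S, l.Holds I) {l : Lit α} (hl : l ∈ clLP P S) : l.Holds I :=
  clLP_subset (T := {l | l.Holds I}) (fun _ hr hbody => hI.holds_head hr hbody) hS hl

end Reduct

section SatModel

variable {α : Type} {Q R : Set (PosRule α)} {J : Set α}

theorem SatModel.union (hQ : SatModel Q J) (hR : ∀ q ∈ R, q.body ⊆ J → ∃ p ∈ J, q.head = some p) :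
    SatModel (Q ∪ R) J := by
  refine ⟨fun p => ⟨fun hp => ?_, ?_⟩, ?_⟩
  · obtain ⟨q, hq, hhead, hbody⟩ := (hQ.1 p).1 hp
    exact ⟨q, Or.inl hq, hhead, hbody⟩
  · rintro ⟨q, hq | hq, hhead, hbody⟩
    · exact (hQ.1 p).2 ⟨q, hq, hhead, hbody⟩
    · obtain ⟨p', hp', hhead'⟩ := hR q hq hbody
      rwa [Option.some_injective _ (hhead.symm.trans hhead')]
  · rintro q (hq | hq) hnone hbody
    · exact hQ.2 q hq hnone hbody
    · obtain ⟨p, -, hhead⟩ := hR q hq hbody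
      simp [hnone] at hhead

theorem SatModel.exists_satModel_subset (hJ : SatModel R J) (hQR : Q ⊆ R) :
    ∃ K ⊆ J, SatModel Q K := by
  set K := {p | PosDeriv {q | q ∈ Q ∧ q.body ⊆ J} p}
  have hKJ : K ⊆ J := by
    rintro p ⟨⟨hq, hbody⟩, hhead, -⟩
    exact (hJ.1 p).2 ⟨_, hQR hq, hhead, hbody⟩
  refine ⟨K, hKJ, fun p => ⟨?_, ?_⟩, ?_⟩
  · rintro ⟨⟨hq, -⟩, hhead, hderiv⟩
    exact ⟨_, hq, hhead, hderiv⟩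
  · rintro ⟨q, hq, hhead, hbody⟩
    exact PosDeriv.step ⟨hq, hbody.trans hKJ⟩ hhead hbody
  · intro q hq hnone hbody
    exact hJ.2 q (hQR hq) hnone (hbody.trans hKJ)

end SatModel

theorem SatModel.sReduct_of_reduct {α : Type} {P : LP α} {I : Set α}
    (hI : SatModel (reduct P I) I) : SatModel (sReduct P I) I := by
  refine hI.union ?_
  rintro q ⟨a, b, -, -, -, hcl, rfl⟩ hb
  refine ⟨a, ?_, rfl⟩
  by_contra ha
  exact hI.holds_of_mem_clLP (by simpa [Lit.Holds] using ha) hcl (hb rfl)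

/-- every stable model of an LP with naf in the head is set-stable. -/
theorem stmt11 {α : Type} (P : LP α) (I : Set α) (h : StableModel P I) :
    SetStableModel P I := by
  obtain ⟨hHB, hI, hmin⟩ := h
  refine ⟨hHB, hI.sReduct_of_reduct, fun J hJI hJ => ?_⟩
  obtain ⟨K, hKJ, hK⟩ := hJ.exists_satModel_subset Set.subset_union_left
  have hKI : K = I := hmin K (hKJ.trans hJI) hK
  exact hJI.antisymm (hKI ▸ hKJ)
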